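/- Let 𝓒 be the convex hull of all 4×4 matrices (1, x₁, s₁, t₁)ᵀ(1, x₁, s₁, t₁) with x₁ + s₁ + t₁ = 1, x₁ ≥ 0, s₁ ≥ 0, t₁ ∈ {0,1}, and let 𝓓 be the set of 4×4 real symmetric doubly nonnegative matrices W of the form W = [[1, x₁, s₁, t₁], [x₁, X₁₁, Z₁₁, 0], [s₁, Z₁₁, S₁₁, 0], [t₁, 0, 0, t₁]] satisfying x₁ + s₁ + t₁ = 1, X₁₁ + Z₁₁ = x₁, and S₁₁ + Z₁₁ = s₁. Then 𝓒 = 𝓓. -/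

import Mathlib

/-!
Both sets consist of matrices `dnnMatrix x s t Z`, the generators of `𝓒` being those with
`Z = x * s`. Since `dnnMatrix` is affine in its parameters and positive semidefinite and
entrywise nonnegative matrices form convex cones, `𝓓` is convex, whence `𝓒 ⊆ 𝓓`. Conversely,
positive semidefiniteness tested on `(0, s, -x, 0)` gives `Z (x + s) ≤ x s`. Splitting off `t`
times the lift of `(0, 0, 1)` and rescaling reduces to `t = 0, x + s = 1`, where the matrix is
affine in `Z ∈ [0, x s]`: its endpoints are the lift of `(x, s, 0)` at `Z = x s` and `x` times
the lift of `(1, 0, 0)` plus `s` times that of `(0, 1, 0)` at `Z = 0`.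
-/

open Matrix

/-- The matrices of `𝓓` with `X₁₁ = x - Z` and `S₁₁ = s - Z` eliminated. -/
def dnnMatrix (x s t Z : ℝ) : Matrix (Fin 4) (Fin 4) ℝ :=
  !![1, x, s, t;
     x, x - Z, Z, 0;
     s, Z, s - Z, 0;
     t, 0, 0, t]

def rankOneLifts : Set (Matrix (Fin 4) (Fin 4) ℝ) :=
  {W | ∃ x₁ s₁ t₁ : ℝ, x₁ + s₁ + t₁ = 1 ∧ 0 ≤ x₁ ∧ 0 ≤ s₁ ∧ (t₁ = 0 ∨ t₁ = 1) ∧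
    W = Matrix.vecMulVec ![1, x₁, s₁, t₁] ![1, x₁, s₁, t₁]}

def dnnRelaxation : Set (Matrix (Fin 4) (Fin 4) ℝ) :=
  {W | ∃ x₁ s₁ t₁ X₁₁ Z₁₁ S₁₁ : ℝ,
    W = !![1, x₁, s₁, t₁;
           x₁, X₁₁, Z₁₁, 0;
           s₁, Z₁₁, S₁₁, 0;
           t₁, 0, 0, t₁] ∧
    x₁ + s₁ + t₁ = 1 ∧ X₁₁ + Z₁₁ = x₁ ∧ S₁₁ + Z₁₁ = s₁ ∧
    W.PosSemidef ∧ (∀ i j, 0 ≤ W i j)}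

lemma dnnMatrix_combo {a b : ℝ} (hab : a + b = 1) (x s t Z x' s' t' Z' : ℝ) :
    a • dnnMatrix x s t Z + b • dnnMatrix x' s' t' Z' =
      dnnMatrix (a * x + b * x') (a * s + b * s') (a * t + b * t') (a * Z + b * Z') := by
  ext i j
  fin_cases i <;> fin_cases j <;> simp [dnnMatrix] <;> first | ring1 | linear_combination hab

lemma vecMulVec_eq_dnnMatrix {x s t : ℝ} (hx : 0 ≤ x) (hs : 0 ≤ s) (ht : t = 0 ∨ t = 1)
    (h : x + s + t = 1) :
    vecMulVec ![1, x, s, t] ![1, x, s, t] = dnnMatrix x s t (x * s) := by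
  obtain rfl | rfl := ht
  · obtain rfl : s = 1 - x := by linarith
    ext i j
    fin_cases i <;> fin_cases j <;> simp [dnnMatrix, vecMulVec_apply] <;> ring
  · obtain ⟨rfl, rfl⟩ : x = 0 ∧ s = 0 := by constructor <;> linarith
    ext i j
    fin_cases i <;> fin_cases j <;> simp [dnnMatrix, vecMulVec_apply]

lemma mem_dnnRelaxation_iff {W : Matrix (Fin 4) (Fin 4) ℝ} :
    W ∈ dnnRelaxation ↔ ∃ x s t Z, x + s + t = 1 ∧ W = dnnMatrix x s t Z ∧
      W.PosSemidef ∧ ∀ i j, 0 ≤ W i j := by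
  constructor
  · rintro ⟨x, s, t, X, Z, S, rfl, hsum, hX, hS, hW⟩
    obtain rfl : X = x - Z := by linarith
    obtain rfl : S = s - Z := by linarith
    exact ⟨x, s, t, Z, hsum, rfl, hW⟩
  · rintro ⟨x, s, t, Z, hsum, rfl, hW⟩
    exact ⟨x, s, t, x - Z, Z, s - Z, rfl, hsum, by ring, by ring, hW⟩

lemma convex_dnnRelaxation : Convex ℝ dnnRelaxation := by
  intro W hW W' hW' a b ha hb hab
  rw [mem_dnnRelaxation_iff] at *
  obtain ⟨x, s, t, Z, hsum, rfl, hpsd, hnn⟩ := hW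
  obtain ⟨x', s', t', Z', hsum', rfl, hpsd', hnn'⟩ := hW'
  refine ⟨_, _, _, _, ?_, dnnMatrix_combo hab .., (hpsd.smul ha).add (hpsd'.smul hb),
    fun i j => ?_⟩
  · linear_combination a * hsum + b * hsum' + hab
  · simpa using add_nonneg (mul_nonneg ha (hnn i j)) (mul_nonneg hb (hnn' i j))

lemma rankOneLifts_subset_dnnRelaxation : rankOneLifts ⊆ dnnRelaxation := by
  rintro W ⟨x, s, t, hsum, hx, hs, ht, rfl⟩
  have hv : ∀ i, 0 ≤ ![1, x, s, t] i := by
    have : 0 ≤ t := by rcases ht with rfl | rfl <;> norm_num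
    intro i; fin_cases i <;> simp [hx, hs, this]
  rw [mem_dnnRelaxation_iff]
  refine ⟨x, s, t, x * s, hsum, vecMulVec_eq_dnnMatrix hx hs ht hsum, ?_,
    fun i j => mul_nonneg (hv i) (hv j)⟩
  simpa using posSemidef_vecMulVec_self_star ![1, x, s, t]

lemma dnnMatrix_mem_rankOneLifts {x s t : ℝ} (hx : 0 ≤ x) (hs : 0 ≤ s) (ht : t = 0 ∨ t = 1)
    (hsum : x + s + t = 1) : dnnMatrix x s t (x * s) ∈ rankOneLifts :=
  ⟨x, s, t, hsum, hx, hs, ht, (vecMulVec_eq_dnnMatrix hx hs ht hsum).symm⟩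

lemma mul_add_le_mul_of_posSemidef_dnnMatrix {x s t Z : ℝ}
    (h : (dnnMatrix x s t Z).PosSemidef) (hx : 0 ≤ x) (hs : 0 ≤ s) : Z * (x + s) ≤ x * s := by
  rcases (add_nonneg hx hs).eq_or_lt with hu | hu
  · rw [← hu, mul_zero]
    exact mul_nonneg hx hs
  have hq : 0 ≤ (x + s) * (x * s - Z * (x + s)) := by
    have := h.dotProduct_mulVec_nonneg ![0, s, -x, 0]
    simp [dnnMatrix, mulVec, dotProduct, Fin.sum_univ_four] at this
    linear_combination this
  exact sub_nonneg.mp ((mul_nonneg_iff_of_pos_left hu).mp hq)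

lemma dnnMatrix_zero_mem_convexHull {x s Z : ℝ} (hx : 0 ≤ x) (hs : 0 ≤ s) (hsum : x + s = 1)
    (hZ : 0 ≤ Z) (hZxs : Z ≤ x * s) : dnnMatrix x s 0 Z ∈ convexHull ℝ rankOneLifts := by
  set T := {Z | dnnMatrix x s 0 Z ∈ convexHull ℝ rankOneLifts}
  have hT : Convex ℝ T := by
    intro Z₁ h₁ Z₂ h₂ a b ha hb hab
    have := convex_convexHull ℝ rankOneLifts h₁ h₂ ha hb hab
    rwa [dnnMatrix_combo hab, ← add_mul, ← add_mul, hab, one_mul, one_mul, mul_zero, mul_zero,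
      add_zero] at this
  have h₀ : (0 : ℝ) ∈ T := by
    have hX := dnnMatrix_mem_rankOneLifts zero_le_one le_rfl (.inl rfl) (by norm_num)
    have hS := dnnMatrix_mem_rankOneLifts le_rfl zero_le_one (.inl rfl) (by norm_num)
    have := convex_convexHull ℝ rankOneLifts (subset_convexHull ℝ _ hX)
      (subset_convexHull ℝ _ hS) hx hs hsum
    simpa [T, dnnMatrix_combo hsum] using this
  have h₁ : x * s ∈ T :=
    subset_convexHull ℝ _ (dnnMatrix_mem_rankOneLifts hx hs (.inl rfl) (by simpa using hsum))
  exact hT.ordConnected.out h₀ h₁ ⟨hZ, hZxs⟩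

lemma dnnMatrix_mem_convexHull {x s t Z : ℝ} (hx : 0 ≤ x) (hs : 0 ≤ s) (ht : 0 ≤ t)
    (hsum : x + s + t = 1) (hZ : 0 ≤ Z) (hZx : Z ≤ x) (hZxs : Z * (x + s) ≤ x * s) :
    dnnMatrix x s t Z ∈ convexHull ℝ rankOneLifts := by
  have hE : dnnMatrix 0 0 1 0 ∈ convexHull ℝ rankOneLifts := subset_convexHull ℝ _ <| by
    simpa using dnnMatrix_mem_rankOneLifts le_rfl le_rfl (.inr rfl) (by norm_num)
  rcases (add_nonneg hx hs).eq_or_lt with hu | hu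
  · obtain ⟨rfl, rfl⟩ : x = 0 ∧ s = 0 := by constructor <;> linarith
    obtain rfl : Z = 0 := le_antisymm hZx hZ
    obtain rfl : t = 1 := by linarith
    exact hE
  have hW₀ : dnnMatrix (x / (x + s)) (s / (x + s)) 0 (Z / (x + s)) ∈
      convexHull ℝ rankOneLifts := by
    refine dnnMatrix_zero_mem_convexHull (by positivity) (by positivity) (by field_simp)
      (by positivity) ?_
    rw [div_mul_div_comm, div_le_div_iff₀ hu (by positivity), ← mul_assoc]
    exact mul_le_mul_of_nonneg_right hZxs hu.le
  have := convex_convexHull ℝ rankOneLifts hE hW₀ ht hu.le (by linarith)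
  rw [dnnMatrix_combo (by linarith)] at this
  convert this using 1
  congr 1 <;> field_simp <;> linarith

lemma dnnRelaxation_subset_convexHull : dnnRelaxation ⊆ convexHull ℝ rankOneLifts := by
  intro W hW
  obtain ⟨x, s, t, Z, hsum, rfl, hpsd, hnn⟩ := mem_dnnRelaxation_iff.mp hW
  have hx : 0 ≤ x := hnn 0 1
  have hs : 0 ≤ s := hnn 0 2
  exact dnnMatrix_mem_convexHull hx hs (hnn 0 3) hsum (hnn 1 2) (sub_nonneg.mp (hnn 1 1))
    (mul_add_le_mul_of_posSemidef_dnnMatrix hpsd hx hs)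

theorem stmt1 :
    convexHull ℝ {W : Matrix (Fin 4) (Fin 4) ℝ | ∃ x₁ s₁ t₁ : ℝ,
        x₁ + s₁ + t₁ = 1 ∧ 0 ≤ x₁ ∧ 0 ≤ s₁ ∧ (t₁ = 0 ∨ t₁ = 1) ∧
        W = Matrix.vecMulVec ![1, x₁, s₁, t₁] ![1, x₁, s₁, t₁]} =
      {W : Matrix (Fin 4) (Fin 4) ℝ | ∃ x₁ s₁ t₁ X₁₁ Z₁₁ S₁₁ : ℝ,
        W = !![1, x₁, s₁, t₁;
               x₁, X₁₁, Z₁₁, 0;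
               s₁, Z₁₁, S₁₁, 0;
               t₁, 0, 0, t₁] ∧
        x₁ + s₁ + t₁ = 1 ∧ X₁₁ + Z₁₁ = x₁ ∧ S₁₁ + Z₁₁ = s₁ ∧
        W.PosSemidef ∧ (∀ i j, 0 ≤ W i j)} :=
  (convexHull_min rankOneLifts_subset_dnnRelaxation convex_dnnRelaxation).antisymm
    dnnRelaxation_subset_convexHull
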